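/- arXiv:2401.00842 — 5 statements merged into one kernel-verified Lean document; each statement's English description precedes it below -/
import Mathlib

section
/- Let L be a lattice with at least two elements and let n, k be positive integers. If L^n contains no antichain of size k (equivalently, every k-element subset of L^n contains two comparable elements), then the direct power L^k cannot be generated by n elements. -/
/-!
If `g` generates `L^k`, look at its columns `v j := fun i => g i j ∈ L^n`. Whenever `v j ≤ v j'`
coordinatewise, every generator satisfies `x j ≤ x j'`, and this inequality is preserved by `⊔`
and `⊓`, so it holds on all of `L^k`. In a nontrivial lattice there are `a < b`, and the element
that is `b` at `j` and `a` elsewhere violates it. Hence the `k` columns form an antichain in `L^n`.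
-/

section

variable {ι L : Type*} [Lattice L]

theorem isSublattice_setOf_apply_le (i j : ι) : IsSublattice {x : ι → L | x i ≤ x j} where
  supClosed _ hx _ hy := sup_le_sup hx hy
  infClosed _ hx _ hy := inf_le_inf hx hy

variable [Nontrivial L] [DecidableEq ι]

theorem not_swap_le_of_latticeClosure_eq_univ {κ : Type*} {g : κ → ι → L}
    (hg : latticeClosure (Set.range g) = Set.univ) {j j' : ι} (hjj' : j ≠ j') :
    ¬ Function.swap g j ≤ Function.swap g j' := by
  intro hle
  have hclosure : latticeClosure (Set.range g) ⊆ {x : ι → L | x j ≤ x j'} :=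
    latticeClosure_min (Set.range_subset_iff.mpr hle) (isSublattice_setOf_apply_le j j')
  obtain ⟨x, y, hxy⟩ := exists_pair_ne L
  have hmem : Function.update (fun _ => x ⊓ y) j (x ⊔ y) ∈ latticeClosure (Set.range g) :=
    hg ▸ trivial
  simpa [Function.update_of_ne hjj'.symm, not_le_of_gt (inf_lt_sup.mpr hxy)] using hclosure hmem

theorem injective_swap_of_latticeClosure_eq_univ {κ : Type*} {g : κ → ι → L}
    (hg : latticeClosure (Set.range g) = Set.univ) : (Function.swap g).Injective := by
  intro j j' h
  by_contra hjj'
  exact not_swap_le_of_latticeClosure_eq_univ hg hjj' h.le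

theorem isAntichain_range_swap_of_latticeClosure_eq_univ {κ : Type*} {g : κ → ι → L}
    (hg : latticeClosure (Set.range g) = Set.univ) :
    IsAntichain (· ≤ ·) (Set.range (Function.swap g)) := by
  rintro _ ⟨j, rfl⟩ _ ⟨j', rfl⟩ hne
  exact not_swap_le_of_latticeClosure_eq_univ hg fun h => hne (congrArg _ h)

end

theorem stmt_0_general (L : Type*) [Lattice L] [Nontrivial L] (n k : ℕ)
    (hantichain : ¬ ∃ A : Finset (Fin n → L), A.card = k ∧
      IsAntichain (· ≤ ·) (A : Set (Fin n → L))) :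
    ¬ ∃ g : Fin n → (Fin k → L),
      latticeClosure (Set.range g) = Set.univ := by
  rintro ⟨g, hg⟩
  let columns : Fin k ↪ (Fin n → L) :=
    ⟨Function.swap g, injective_swap_of_latticeClosure_eq_univ hg⟩
  refine hantichain ⟨Finset.univ.map columns, by simp, ?_⟩
  simpa [columns] using isAntichain_range_swap_of_latticeClosure_eq_univ hg

/-- If `L` is a nontrivial lattice and `L^n` has no antichain of
size `k`, then `L^k` is not generated by `n` elements. -/
theorem stmt_0 (L : Type*) [Lattice L] [Nontrivial L] (n k : ℕ)
    (hn : 0 < n) (hk : 0 < k)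
    (hantichain : ¬ ∃ A : Finset (Fin n → L), A.card = k ∧
      IsAntichain (· ≤ ·) (A : Set (Fin n → L))) :
    ¬ ∃ g : Fin n → (Fin k → L),
      latticeClosure (Set.range g) = Set.univ :=
  stmt_0_general L n k hantichain
end

section
/- Let F be a field, d ≥ 3 an integer, V = F^d, and L = Sub(V) its subspace lattice. Let t be the minimum cardinality of a generating set of F as a field, let M = ⌊d²/4⌋, and let m = ⌈t/M⌉ (the least cardinal m with m·M ≥ t). Then every generating set of L has cardinality at least m. Equivalently, if L is generated by m elements, then m·⌊d²/4⌋ ≥ t. -/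
/-!
Over a subfield `K ⊆ F`, call a subspace of `F^ι` defined over `K` if it is spanned by vectors
with coordinates in `K`. A subspace of dimension `n` has a basis in reduced row echelon form: it
projects isomorphically onto `n` pivot coordinates, and the preimages of the unit vectors have
their remaining `n (d - n) ≤ ⌊d² / 4⌋` coordinates as the only entries outside `{0, 1}`. So the
`m` generators are all defined over a subfield `K` generated by `m ⌊d² / 4⌋` elements. Subspaces
defined over `K` form a sublattice: joins are clear, and for meets, extending scalars from `K^ι`
to `F^ι` preserves dimension, so the dimension formula forces it to commute with intersections.
Hence every subspace is defined over `K`; for the line through `e₀ + a e₁` this means `a ∈ K`.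
-/

open Module Set

namespace Submodule

variable {F : Type*} [Field F] {ι : Type*}

def IsDefinedOver (K : Subfield F) (W : Submodule F (ι → F)) : Prop :=
  ∃ S : Set (ι → F), (∀ v ∈ S, ∀ j, v j ∈ K) ∧ span F S = W

variable {K : Subfield F}

noncomputable def baseChangePi (U : Submodule K (ι → K)) : Submodule F (ι → F) :=
  span F (LinearMap.compLeft (Algebra.linearMap K F) ι '' U)

lemma baseChangePi_span (S : Set (ι → K)) :
    (span K S).baseChangePi = span F (LinearMap.compLeft (Algebra.linearMap K F) ι '' S) := by
  refine le_antisymm (span_le.2 ?_) (span_mono (image_mono subset_span))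
  calc _ ⊆ (span K (LinearMap.compLeft (Algebra.linearMap K F) ι '' S) : Set (ι → F)) :=
        image_span_subset_span _ _
    _ ⊆ _ := span_subset_span K F _

lemma baseChangePi_sup (U₁ U₂ : Submodule K (ι → K)) :
    (U₁ ⊔ U₂).baseChangePi = U₁.baseChangePi ⊔ U₂.baseChangePi := by
  rw [← span_eq U₁, ← span_eq U₂, ← span_union, baseChangePi_span, baseChangePi_span,
    baseChangePi_span, image_union, span_union]

lemma finrank_baseChangePi [Finite ι] (U : Submodule K (ι → K)) :
    finrank F U.baseChangePi = finrank K U := by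
  let b := finBasis K U
  have hspan : span K (range (U.subtype ∘ b)) = U := by
    rw [range_comp, U.coe_subtype, span_val_image_eq_iff, b.span_eq]
  have hli : LinearIndependent F (fun i ↦ algebraMap K F ∘ (U.subtype ∘ b) i) :=
    linearIndependent_algebraMap_comp_iff.2 (b.linearIndependent.map' U.subtype U.ker_subtype)
  calc finrank F U.baseChangePi
      = finrank F (span F (range fun i ↦ algebraMap K F ∘ (U.subtype ∘ b) i)) := by
        conv_lhs => rw [← hspan, baseChangePi_span, ← range_comp]
        rfl
    _ = finrank K U := by rw [finrank_span_eq_card hli, Fintype.card_fin]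

lemma baseChangePi_inf [Finite ι] (U₁ U₂ : Submodule K (ι → K)) :
    (U₁ ⊓ U₂).baseChangePi = U₁.baseChangePi ⊓ U₂.baseChangePi := by
  refine eq_of_le_of_finrank_le (le_inf (span_mono (image_mono inf_le_left))
    (span_mono (image_mono inf_le_right))) ?_
  have hF := finrank_sup_add_finrank_inf_eq U₁.baseChangePi U₂.baseChangePi
  have hK := finrank_sup_add_finrank_inf_eq U₁ U₂
  rw [← baseChangePi_sup, finrank_baseChangePi, finrank_baseChangePi, finrank_baseChangePi] at hF
  rw [finrank_baseChangePi]
  omega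

lemma isDefinedOver_iff_exists_baseChangePi {W : Submodule F (ι → F)} :
    W.IsDefinedOver K ↔ ∃ U : Submodule K (ι → K), U.baseChangePi = W := by
  constructor
  · rintro ⟨S, hS, rfl⟩
    refine ⟨span K (LinearMap.compLeft (Algebra.linearMap K F) ι ⁻¹' S), ?_⟩
    rw [baseChangePi_span, image_preimage_eq_of_subset]
    exact fun v hv ↦ ⟨fun j ↦ ⟨v j, hS v hv j⟩, rfl⟩
  · rintro ⟨U, rfl⟩
    exact ⟨_, by rintro _ ⟨x, -, rfl⟩ j; exact (x j).2, rfl⟩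

lemma IsDefinedOver.mono {K' : Subfield F} (h : K ≤ K') {W : Submodule F (ι → F)}
    (hW : W.IsDefinedOver K) : W.IsDefinedOver K' :=
  let ⟨S, hS, hW⟩ := hW
  ⟨S, fun v hv j ↦ h (hS v hv j), hW⟩

lemma isSublattice_setOf_isDefinedOver [Finite ι] :
    IsSublattice {W : Submodule F (ι → F) | W.IsDefinedOver K} where
  supClosed := by
    rintro _ ⟨S₁, h₁, rfl⟩ _ ⟨S₂, h₂, rfl⟩
    exact ⟨S₁ ∪ S₂, by rintro v (hv | hv); exacts [h₁ v hv, h₂ v hv], span_union _ _⟩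
  infClosed := by
    rintro _ hW₁ _ hW₂
    obtain ⟨U₁, rfl⟩ := isDefinedOver_iff_exists_baseChangePi.1 hW₁
    obtain ⟨U₂, rfl⟩ := isDefinedOver_iff_exists_baseChangePi.1 hW₂
    exact isDefinedOver_iff_exists_baseChangePi.2 ⟨U₁ ⊓ U₂, baseChangePi_inf U₁ U₂⟩

lemma exists_pivot_finset [Fintype ι] (W : Submodule F (ι → F)) :
    ∃ P : Finset ι, P.card = finrank F W ∧ ∀ x ∈ W, (∀ p ∈ P, x p = 0) → x = 0 := by
  classical
  set v : ι → (ι → F) ⧸ W := W.mkQ ∘ Pi.basisFun F ι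
  -- The unit vectors indexed by `T` span a complement of `W`; `P` is the complement of `T`.
  obtain ⟨T, -, -, hT, hli⟩ :=
    exists_linearIndepOn_extension (linearIndepOn_empty F v) (empty_subset univ)
  have hspanT : span F (v '' T) = ⊤ := by
    refine top_le_iff.1 (le_trans ?_ (span_le.2 hT))
    rw [image_univ, range_comp, ← map_span, (Pi.basisFun F ι).span_eq, map_top, range_mkQ]
  refine ⟨T.toFinsetᶜ, ?_, fun x hxW hx ↦ ?_⟩
  · have hcardT : finrank F ((ι → F) ⧸ W) = T.toFinset.card := by
      rw [← finrank_top, ← hspanT, image_eq_range, finrank_span_eq_card hli, toFinset_card]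
    have := W.finrank_quotient_add_finrank
    rw [finrank_fintype_fun_eq_card, hcardT] at this
    rw [Finset.card_compl]
    omega
  · have hsupp : (Pi.basisFun F ι).repr x ∈ Finsupp.supported F F T := by
      rw [Finsupp.mem_supported']
      intro j hj
      simpa using hx j (by simpa using hj)
    have hcomb : Finsupp.linearCombination F v ((Pi.basisFun F ι).repr x) = 0 := by
      rw [← Finsupp.apply_linearCombination, (Pi.basisFun F ι).linearCombination_repr, mkQ_apply,
        Quotient.mk_eq_zero]
      exact hxW
    exact (Pi.basisFun F ι).repr.map_eq_zero_iff.1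
      (linearIndepOn_iff.1 hli _ hsupp hcomb)

lemma exists_finset_card_le_isDefinedOver_of_pivot [Fintype ι] [DecidableEq ι]
    {W : Submodule F (ι → F)} {P : Finset ι} (hcard : P.card = finrank F W)
    (hP : ∀ x ∈ W, (∀ p ∈ P, x p = 0) → x = 0) :
    ∃ H : Finset F, H.card ≤ P.card * Pᶜ.card ∧
      W.IsDefinedOver (Subfield.closure (H : Set F)) := by
  classical
  let φ : W →ₗ[F] (P → F) := (LinearMap.funLeft F F ((↑) : P → ι)).comp W.subtype
  have hinj : Function.Injective φ := by
    rw [← LinearMap.ker_eq_bot, eq_bot_iff]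
    rintro ⟨x, hxW⟩ hx
    exact (mk_eq_zero _ _).2 (hP x hxW fun p hp ↦ congrFun hx ⟨p, hp⟩)
  have hrank : finrank F W = finrank F (P → F) := by simp [hcard]
  have hφ : Function.Bijective φ :=
    ⟨hinj, (LinearMap.injective_iff_surjective_of_finrank_eq_finrank hrank).1 hinj⟩
  let e := LinearEquiv.ofBijective φ hφ
  let c : P → ι → F := fun p ↦ e.symm (Pi.single p 1)
  have hc (p q : P) : c p q = (Pi.single p 1 : P → F) q :=
    congrFun (e.apply_symm_apply (Pi.single p 1)) q
  have hspan : span F (range c) = W := by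
    have : range c = Subtype.val '' range ((Pi.basisFun F P).map e.symm) := by
      rw [← range_comp]
      congr 1
      funext p
      simp [c]
    rw [this, span_val_image_eq_iff, Basis.span_eq]
  refine ⟨Finset.univ.image fun q : P × ↥Pᶜ ↦ c q.1 q.2, ?_, range c, ?_, hspan⟩
  · refine Finset.card_image_le.trans ?_
    rw [Finset.card_univ, Fintype.card_prod, Fintype.card_coe, Fintype.card_coe]
  · rintro _ ⟨p, rfl⟩ j
    by_cases hj : j ∈ P
    · rw [hc p ⟨j, hj⟩, Pi.single_apply]
      split_ifs
      exacts [one_mem _, zero_mem _]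
    · exact Subfield.subset_closure (by simpa using ⟨p, p.2, j, hj, rfl⟩)

lemma exists_finset_card_le_isDefinedOver [Fintype ι] (W : Submodule F (ι → F)) :
    ∃ H : Finset F, H.card ≤ Fintype.card ι ^ 2 / 4 ∧
      W.IsDefinedOver (Subfield.closure (H : Set F)) := by
  classical
  obtain ⟨P, hcard, hP⟩ := exists_pivot_finset W
  obtain ⟨H, hH, hW⟩ := exists_finset_card_le_isDefinedOver_of_pivot hcard hP
  refine ⟨H, hH.trans ?_, hW⟩
  rw [Nat.le_div_iff_mul_le four_pos, ← Finset.card_add_card_compl P, mul_comm, ← mul_assoc]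
  exact four_mul_le_sq_add _ _

lemma eq_top_of_forall_isDefinedOver {i j : ι} (hij : i ≠ j)
    (h : ∀ W : Submodule F (ι → F), W.IsDefinedOver K) : K = ⊤ := by
  classical
  refine eq_top_iff.2 fun a _ ↦ ?_
  obtain ⟨S, hSK, hS⟩ := h (span F {Pi.single i 1 + Pi.single j a})
  obtain ⟨s, hs, hs0⟩ : ∃ s ∈ S, s ≠ 0 := by
    by_contra! hS0
    rw [span_eq_bot.2 hS0, eq_comm, span_singleton_eq_bot] at hS
    simpa [hij] using congrFun hS i
  obtain ⟨c, rfl⟩ := mem_span_singleton.1 (hS ▸ subset_span hs)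
  have hc : c ≠ 0 := by rintro rfl; simp at hs0
  have hci : c ∈ K := by simpa [hij] using hSK _ hs i
  have hcj : c * a ∈ K := by simpa [hij.symm] using hSK _ hs j
  simpa [hc] using K.mul_mem (K.inv_mem hci) hcj

end Submodule

/-- If the subspace lattice of `F^d` (`d ≥ 3`) is generated by `m`
elements, then `m · ⌊d²/4⌋` is at least the minimal number of generators of
the field `F`; i.e. `F` has a generating set of size at most `m · ⌊d²/4⌋`. -/
theorem stmt_8 (F : Type*) [Field F] (d : ℕ) (hd : 3 ≤ d) (m : ℕ)
    (g : Fin m → Submodule F (Fin d → F))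
    (hgen : latticeClosure (Set.range g) = Set.univ) :
    ∃ H : Finset F, H.card ≤ m * (d ^ 2 / 4) ∧
      Subfield.closure (H : Set F) = ⊤ := by
  classical
  choose H hHcard hH using fun i ↦ (g i).exists_finset_card_le_isDefinedOver
  set K := Subfield.closure ((Finset.univ.biUnion H : Finset F) : Set F)
  have hg : range g ⊆ {W | W.IsDefinedOver K} := by
    rintro _ ⟨i, rfl⟩
    refine (hH i).mono (Subfield.closure_mono ?_)
    exact_mod_cast Finset.subset_biUnion_of_mem H (Finset.mem_univ i)
  have hall (W : Submodule F (Fin d → F)) : W.IsDefinedOver K :=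
    latticeClosure_min hg Submodule.isSublattice_setOf_isDefinedOver (hgen ▸ mem_univ W)
  refine ⟨Finset.univ.biUnion H, ?_, Submodule.eq_top_of_forall_isDefinedOver
    (i := ⟨0, by omega⟩) (j := ⟨1, by omega⟩) (by simp [Fin.ext_iff]) hall⟩
  calc _ ≤ ∑ i, (H i).card := Finset.card_biUnion_le
    _ ≤ ∑ _i : Fin m, d ^ 2 / 4 := Finset.sum_le_sum fun i _ ↦ by simpa using hHcard i
    _ = m * (d ^ 2 / 4) := by simp
end

section
/- Let F be a field with more than two elements and let d = 3. In the projective plane over F, if (g_1, g_2, g_3, g_4) is a quadruple of points and lines in general position with three of the g_i points and one a line (type (3,1)), then there exists a complete quadrangle (p_1, p_2, p_3, p_4) (four points in general position) with p_i ≤ g_i for all i. -/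
/-! The line `g l` carries `|F| + 1 ≥ 4` points, while each of the three sides of the triangle
formed by the points `g i`, `i ≠ l`, meets it in at most one point (the line contains no vertex,
so it is not a side). Hence some point `q` of `g l` lies on no side, and replacing `g l` by `q`
gives a complete quadrangle: by the exchange property of collinearity, every collinear triple
through `q` would put `q` on a side. -/

/-- A quadruple of points/lines (1- and 2-dimensional subspaces of `F³`) is in
general position: it is an antichain, no three points among its components are
collinear, and no three lines among its components are concurrent. -/
def GeneralPosition {F : Type*} [Field F]
    (g : Fin 4 → Submodule F (Fin 3 → F)) : Prop :=
  (∀ i j, i ≠ j → ¬ g i ≤ g j) ∧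
  (∀ i j k, i ≠ j → j ≠ k → i ≠ k →
    Module.finrank F (g i) = 1 → Module.finrank F (g j) = 1 →
    Module.finrank F (g k) = 1 → ¬ g i ≤ g j ⊔ g k) ∧
  (∀ i j k, i ≠ j → j ≠ k → i ≠ k →
    Module.finrank F (g i) = 2 → Module.finrank F (g j) = 2 →
    Module.finrank F (g k) = 2 → ¬ g i ⊓ g j ≤ g k)

open Module Submodule

section Points

variable {K M : Type*} [Field K] [AddCommGroup M] [Module K M] {x y z L : Submodule K M}

theorem eq_of_le_of_finrank_eq_one (h : x ≤ y) (hx : finrank K x = 1) (hy : finrank K y = 1) :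
    x = y :=
  have : FiniteDimensional K y := Module.finite_of_finrank_eq_succ hy
  eq_of_le_of_finrank_eq h (hx.trans hy.symm)

theorem finrank_sup_le_two (hx : finrank K x = 1) (hy : finrank K y = 1) :
    finrank K ↥(x ⊔ y) ≤ 2 := by
  have := Module.finite_of_finrank_eq_succ hx
  have := Module.finite_of_finrank_eq_succ hy
  have := Submodule.finrank_sup_add_finrank_inf_eq x y
  omega

theorem finrank_sup_eq_two (hx : finrank K x = 1) (hy : finrank K y = 1) (hxy : x ≠ y) :
    finrank K ↥(x ⊔ y) = 2 := by
  have := Module.finite_of_finrank_eq_succ hx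
  have := Module.finite_of_finrank_eq_succ hy
  have hlt : x < x ⊔ y := left_lt_sup.mpr fun h => hxy (eq_of_le_of_finrank_eq_one h hy hx).symm
  have := finrank_lt_finrank_of_lt hlt
  have := finrank_sup_le_two hx hy
  omega

theorem le_sup_of_le_sup_of_ne (hx : finrank K x = 1) (hy : finrank K y = 1)
    (hz : finrank K z = 1) (hxz : x ≠ z) (h : x ≤ y ⊔ z) : y ≤ x ⊔ z := by
  have := Module.finite_of_finrank_eq_succ hy
  have := Module.finite_of_finrank_eq_succ hz
  have heq : x ⊔ z = y ⊔ z := eq_of_le_of_finrank_le (sup_le h le_sup_right)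
    ((finrank_sup_le_two hy hz).trans (finrank_sup_eq_two hx hz hxz).ge)
  exact heq ▸ le_sup_left

theorem le_of_le_sup_of_finrank_eq_two (hL : finrank K L = 2) (hx : finrank K x = 1)
    (hy : finrank K y = 1) (h : L ≤ x ⊔ y) : x ≤ L := by
  have := Module.finite_of_finrank_eq_succ hx
  have := Module.finite_of_finrank_eq_succ hy
  have heq : L = x ⊔ y := eq_of_le_of_finrank_le h (hL ▸ finrank_sup_le_two hx hy)
  exact heq ▸ le_sup_left

end Points

section Avoidance

variable {K E : Type*} [Field K] [AddCommGroup E] [Module K E]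

theorem linearIndependent_pair_elim_add_smul {x y : E} (hxy : LinearIndependent K ![x, y])
    {a b : Option K} (hab : a ≠ b) :
    LinearIndependent K ![a.elim y (x + · • y), b.elim y (x + · • y)] := by
  rw [LinearIndependent.pair_iff] at hxy ⊢
  intro s t hst
  rcases a with _ | a <;> rcases b with _ | b <;> simp only [Option.elim] at hst
  · exact absurd rfl hab
  · obtain ⟨h₁, h₂⟩ := hxy t (s + t * b) (by rw [← hst]; module)
    subst h₁; simpa using h₂
  · obtain ⟨h₁, h₂⟩ := hxy s (s * a + t) (by rw [← hst]; module)
    subst h₁; simpa using h₂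
  · obtain ⟨h₁, h₂⟩ := hxy (s + t) (s * a + t * b) (by rw [← hst]; module)
    have hb : b ≠ a := fun h => hab (h ▸ rfl)
    have ht : t * (b - a) = 0 := by linear_combination h₂ - a * h₁
    have ht : t = 0 := (mul_eq_zero.mp ht).resolve_right (sub_ne_zero.mpr hb)
    exact ⟨by simpa [ht] using h₁, ht⟩

theorem eq_top_of_linearIndependent_pair_mem (hE : finrank K E = 2) {p : Submodule K E}
    {x y : E} (hxy : LinearIndependent K ![x, y]) (hx : x ∈ p) (hy : y ∈ p) : p = ⊤ := by
  have := Module.finite_of_finrank_eq_succ hE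
  have hspan : span K (Set.range ![x, y]) = ⊤ :=
    eq_top_of_finrank_eq (by rw [finrank_span_eq_card hxy, hE]; simp)
  refine eq_top_iff.mpr (hspan ▸ span_le.mpr ?_)
  rintro _ ⟨i, rfl⟩
  fin_cases i
  exacts [hx, hy]

theorem exists_ne_zero_forall_notMem_of_finrank_eq_two {ι : Type*} (hE : finrank K E = 2)
    (s : Finset ι) (p : ι → Submodule K E) (h₁ : ∀ i ∈ s, p i ≠ ⊤)
    (h₂ : s.card ≤ ENat.card K) : ∃ v : E, v ≠ 0 ∧ ∀ i ∈ s, v ∉ p i := by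
  have := Module.finite_of_finrank_eq_succ hE
  let b := Module.finBasisOfFinrankEq K E hE
  have hb : LinearIndependent K ![b 0, b 1] := by
    convert b.linearIndependent
    ext i; fin_cases i <;> rfl
  -- `|K| + 1` pairwise independent vectors, one on each line through the origin
  let u : Option K → E := fun a => a.elim (b 1) (b 0 + · • b 1)
  have hu : ∀ a c, a ≠ c → LinearIndependent K ![u a, u c] :=
    fun a c hac => linearIndependent_pair_elim_add_smul hb hac
  by_contra! hcover
  have hmem : ∀ a, ∃ i : s, u a ∈ p i := fun a => by
    obtain ⟨c, hc⟩ := exists_ne a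
    obtain ⟨i, hi, hai⟩ := hcover (u a) ((hu a c hc.symm).ne_zero 0)
    exact ⟨⟨i, hi⟩, hai⟩
  choose f hf using hmem
  obtain ⟨a, c, hac, hfac⟩ : ∃ a c, a ≠ c ∧ f a = f c := by
    by_contra! hinj
    have hle := ENat.card_le_card_of_injective (f := f) fun a c h =>
      by_contra fun hac => hinj a c hac h
    rw [ENat.card_congr (Equiv.optionEquivSumPUnit.{0} K), ENat.card_sum] at hle
    simp only [ENat.card_eq_coe_fintype_card, Fintype.card_unique, Fintype.card_coe,
      Nat.cast_one] at hle
    have hfin : ENat.card K ≠ ⊤ :=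
      ne_top_of_le_ne_top (ENat.natCast_ne_top _) (le_self_add.trans hle)
    exact (ENat.add_one_le_iff hfin).mp hle |>.not_ge h₂
  exact h₁ _ (f a).2 (eq_top_of_linearIndependent_pair_mem hE (hu a c hac) (hf a) (hfac ▸ hf c))

end Avoidance

theorem Fin.four_exists_compl_pair_eq_of_ne {k l : Fin 4} (hkl : k ≠ l) :
    ∃ i j, i ≠ j ∧ i ≠ l ∧ j ≠ l ∧ ({k, l}ᶜ : Finset (Fin 4)) = {i, j} := by
  revert k l; decide

theorem Fin.four_exists_compl_pair_eq_pair {i j l : Fin 4} (hi : i ≠ l) (hj : j ≠ l)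
    (hij : i ≠ j) : ∃ k, k ≠ l ∧ ({k, l}ᶜ : Finset (Fin 4)) = {i, j} := by
  revert i j l; decide

section Quadruple

variable {F : Type*} [Field F] {g : Fin 4 → Submodule F (Fin 3 → F)} {l : Fin 4}

theorem generalPosition_of_finrank_eq_one {p : Fin 4 → Submodule F (Fin 3 → F)}
    (hp : ∀ i, finrank F (p i) = 1) (hinj : Function.Injective p)
    (hcol : ∀ i j k, i ≠ j → j ≠ k → i ≠ k → ¬ p i ≤ p j ⊔ p k) : GeneralPosition p :=
  ⟨fun i j hij hle => hij (hinj (eq_of_le_of_finrank_eq_one hle (hp i) (hp j))),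
    fun i j k hij hjk hik _ _ _ => hcol i j k hij hjk hik,
    fun i _ _ _ _ _ hi => by simp [hp i] at hi⟩

theorem finrank_update_eq_one (hpt : ∀ i, i ≠ l → finrank F (g i) = 1)
    {q : Submodule F (Fin 3 → F)} (hq : finrank F q = 1) (i : Fin 4) :
    finrank F (Function.update g l q i) = 1 := by
  rcases eq_or_ne i l with rfl | hi
  · rwa [Function.update_self]
  · rw [Function.update_of_ne hi]
    exact hpt i hi

theorem generalPosition_update (hgp : GeneralPosition g)
    (hpt : ∀ i, i ≠ l → finrank F (g i) = 1) {q : Submodule F (Fin 3 → F)}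
    (hq : finrank F q = 1) (hql : q ≤ g l)
    (hqside : ∀ i j, i ≠ l → j ≠ l → i ≠ j → ¬ q ≤ g i ⊔ g j) :
    GeneralPosition (Function.update g l q) := by
  obtain ⟨hanti, hcol, -⟩ := hgp
  have hself : Function.update g l q l = q := Function.update_self l q g
  have hother : ∀ i, i ≠ l → Function.update g l q i = g i :=
    fun i hi => Function.update_of_ne hi q g
  have hq_ne : ∀ i, i ≠ l → g i ≠ q := fun i hi h => hanti i l hi (h ▸ hql)
  refine generalPosition_of_finrank_eq_one (finrank_update_eq_one hpt hq) (fun i j hij => ?_) ?_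
  · by_contra hne
    rcases eq_or_ne i l with rfl | hi
    · rw [hself, hother j (Ne.symm hne)] at hij
      exact hq_ne j (Ne.symm hne) hij.symm
    rcases eq_or_ne j l with rfl | hj
    · rw [hself, hother i hi] at hij
      exact hq_ne i hi hij
    rw [hother i hi, hother j hj] at hij
    exact hanti i j hne hij.le
  · intro i j k hij hjk hik hle
    rcases eq_or_ne i l with rfl | hi
    · rw [hself, hother j (Ne.symm hij), hother k (Ne.symm hik)] at hle
      exact hqside j k (Ne.symm hij) (Ne.symm hik) hjk hle
    rcases eq_or_ne j l with rfl | hj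
    · rw [hself, hother i hi, hother k (Ne.symm hjk)] at hle
      exact hqside i k hi (Ne.symm hjk) hik <| le_sup_of_le_sup_of_ne (hpt i hi) hq
        (hpt k (Ne.symm hjk)) (hanti i k hik ∘ le_of_eq) hle
    rcases eq_or_ne k l with rfl | hk
    · rw [hself, hother i hi, hother j hj, sup_comm] at hle
      exact hqside i j hi hj hij <| le_sup_of_le_sup_of_ne (hpt i hi) hq (hpt j hj)
        (hanti i j hij ∘ le_of_eq) hle
    rw [hother i hi, hother j hj, hother k hk] at hle
    exact hcol i j k hij hjk hik (hpt i hi) (hpt j hj) (hpt k hk) hle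

theorem exists_point_le_not_le_sides (hF : 3 ≤ ENat.card F) (hgp : GeneralPosition g)
    (hl : finrank F (g l) = 2) (hpt : ∀ i, i ≠ l → finrank F (g i) = 1) :
    ∃ q : Submodule F (Fin 3 → F), finrank F q = 1 ∧ q ≤ g l ∧
      ∀ i j, i ≠ l → j ≠ l → i ≠ j → ¬ q ≤ g i ⊔ g j := by
  -- the side of the triangle opposite the vertex `g k`
  let side (k : Fin 4) := ⨆ m ∈ ({k, l}ᶜ : Finset (Fin 4)), g m
  have hside : ∀ k ∈ Finset.univ.erase l, ¬ g l ≤ side k := by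
    intro k hk hle
    obtain ⟨i, j, -, hi, hj, hkl⟩ :=
      Fin.four_exists_compl_pair_eq_of_ne (Finset.ne_of_mem_erase hk)
    simp only [side, hkl, Finset.iSup_insert, Finset.iSup_singleton] at hle
    exact hgp.1 i l hi (le_of_le_sup_of_finrank_eq_two hl (hpt i hi) (hpt j hj) hle)
  obtain ⟨v, hv0, hv⟩ := exists_ne_zero_forall_notMem_of_finrank_eq_two hl
    (Finset.univ.erase l) (fun k => (side k).comap (g l).subtype)
    (by simpa [comap_subtype_eq_top] using hside) (by simpa using hF)
  refine ⟨span F {(v : Fin 3 → F)}, finrank_span_singleton (by simpa using hv0),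
    (span_singleton_le_iff_mem _ _).mpr v.2, fun i j hi hj hij hle => ?_⟩
  obtain ⟨k, hk, hkl⟩ := Fin.four_exists_compl_pair_eq_pair hi hj hij
  apply hv k (Finset.mem_erase.mpr ⟨hk, Finset.mem_univ _⟩)
  show (v : Fin 3 → F) ∈ side k
  simp only [side, hkl, Finset.iSup_insert, Finset.iSup_singleton]
  exact hle (mem_span_singleton_self _)

end Quadruple

/-- Over a field with more than two elements, a quadruple in
general position of type (3,1) (three points and one line) dominates a complete
quadrangle: there are four points in general position with `p i ≤ g i`. -/
theorem stmt_10 (F : Type*) [Field F] (hF : (3 : Cardinal) ≤ Cardinal.mk F)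
    (g : Fin 4 → Submodule F (Fin 3 → F)) (hgp : GeneralPosition g)
    (htype : ∃ l : Fin 4, Module.finrank F (g l) = 2 ∧
      ∀ i, i ≠ l → Module.finrank F (g i) = 1) :
    ∃ p : Fin 4 → Submodule F (Fin 3 → F),
      (∀ i, Module.finrank F (p i) = 1) ∧ GeneralPosition p ∧
      ∀ i, p i ≤ g i := by
  obtain ⟨l, hl, hpt⟩ := htype
  obtain ⟨q, hq, hql, hqside⟩ :=
    exists_point_le_not_le_sides (by simpa [ENat.card] using hF) hgp hl hpt
  refine ⟨Function.update g l q, finrank_update_eq_one hpt hq,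
    generalPosition_update hgp hpt hq hql hqside, fun i => ?_⟩
  rcases eq_or_ne i l with rfl | hi
  · simpa using hql
  · simp [hi]
end

section
/- Let F be a prime field (F = Q or F = Z/p for a prime p), let L be the lattice of subspaces of F³, and let p_1 = F·(1,0,0), p_2 = F·(0,1,0), p_3 = F·(0,0,1), p_4 = F·(1,1,1) be four one-dimensional subspaces. Then {p_1, p_2, p_3, p_4} generates L. -/
/-!
The meet of two lines of the projective plane is computed by a double cross product:
`u ⨯₃ v` is a normal vector of the plane `span {u, v}`, so two planes meet in the line spanned by
the cross product of their normals. With this, von Staudt's constructions show that the set of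
`t` for which the point `(1 : t : 0)` lies in the lattice generated by the quadrangle contains `1`
and is closed under subtraction and division, hence is a subfield, hence all of `F`. Every
projective point is then generated, and every subspace is a finite join of points.
-/

open Submodule Matrix

section CrossProduct

variable {F : Type*} [Field F]

lemma cross_dotProduct_eq_zero_of_mem_span_pair {u v z : Fin 3 → F} (hz : z ∈ span F {u, v}) :
    u ⨯₃ v ⬝ᵥ z = 0 := by
  obtain ⟨a, b, rfl⟩ := mem_span_pair.1 hz
  simp [dotProduct_add, dotProduct_smul, dotProduct_comm _ u, dotProduct_comm _ v,
    dot_self_cross, dot_cross_self]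

lemma mem_span_singleton_of_cross_eq_zero {m z : Fin 3 → F} (hm : m ≠ 0) (h : m ⨯₃ z = 0) :
    z ∈ span F {m} := by
  have hdep : ¬LinearIndependent F ![m, z] := by
    rw [← crossProduct_ne_zero_iff_linearIndependent, not_not, h]
  obtain ⟨a, ha⟩ : ∃ a : F, a • m = z := by
    simpa [LinearIndependent.pair_iff' hm] using hdep
  exact mem_span_singleton.2 ⟨a, ha⟩

theorem span_pair_inf_span_pair {u v w x : Fin 3 → F} (h : u ⨯₃ v ⨯₃ (w ⨯₃ x) ≠ 0) :
    span F {u, v} ⊓ span F {w, x} = span F {u ⨯₃ v ⨯₃ (w ⨯₃ x)} := by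
  refine le_antisymm (fun z hz => mem_span_singleton_of_cross_eq_zero h ?_) ?_
  · obtain ⟨huv, hwx⟩ := mem_inf.1 hz
    rw [cross_cross_eq_smul_sub_smul, cross_dotProduct_eq_zero_of_mem_span_pair huv,
      cross_dotProduct_eq_zero_of_mem_span_pair hwx, zero_smul, zero_smul, sub_zero]
  · rw [span_singleton_le_iff_mem, mem_inf, mem_span_pair, mem_span_pair]
    refine ⟨⟨-(v ⬝ᵥ w ⨯₃ x), u ⬝ᵥ w ⨯₃ x, ?_⟩, ⟨u ⨯₃ v ⬝ᵥ x, -(w ⬝ᵥ u ⨯₃ v), ?_⟩⟩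
    · rw [cross_cross_eq_smul_sub_smul]; module
    · rw [cross_cross_eq_smul_sub_smul']; module

end CrossProduct

theorem SupClosed.mem_of_fg {R M : Type*} [Semiring R] [AddCommMonoid M] [Module R M]
    {S : Set (Submodule R M)} (hS : SupClosed S) (h : ∀ x : M, R ∙ x ∈ S)
    {N : Submodule R M} (hN : N.FG) : N ∈ S :=
  fg_induction (motive := fun N _ => N ∈ S) h (fun _ _ _ _ h₁ h₂ => hS h₁ h₂) N hN

theorem Subfield.eq_univ_of_sub_mem_of_div_mem {F : Type*} [Field F]
    (hprime : ∀ K : Subfield F, K = ⊤) {s : Set F} (one_mem : 1 ∈ s)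
    (sub_mem : ∀ a ∈ s, ∀ b ∈ s, a - b ∈ s) (div_mem : ∀ a ∈ s, ∀ b ∈ s, a / b ∈ s) :
    s = Set.univ := by
  have zero_mem : 0 ∈ s := sub_self (1 : F) ▸ sub_mem 1 one_mem 1 one_mem
  have neg_mem : ∀ a ∈ s, -a ∈ s := fun a ha => zero_sub a ▸ sub_mem 0 zero_mem a ha
  have inv_mem : ∀ a ∈ s, a⁻¹ ∈ s := fun a ha => one_div a ▸ div_mem 1 one_mem a ha
  let K : Subfield F :=
    { carrier := s
      zero_mem' := zero_mem
      one_mem' := one_mem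
      add_mem' := fun {a b} ha hb => sub_neg_eq_add a b ▸ sub_mem a ha _ (neg_mem b hb)
      neg_mem' := fun {a} ha => neg_mem a ha
      mul_mem' := fun {a b} ha hb => div_inv_eq_mul a b ▸ div_mem a ha _ (inv_mem b hb)
      inv_mem' := inv_mem }
  exact (congrArg SetLike.coe (hprime K)).trans Subfield.coe_top

section Quadrangle

variable (F : Type*) [Field F]

def quadrangleLattice : Set (Submodule F (Fin 3 → F)) :=
  latticeClosure
    {span F {![1, 0, 0]}, span F {![0, 1, 0]}, span F {![0, 0, 1]}, span F {![1, 1, 1]}}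

variable {F}

lemma isSublattice_quadrangleLattice : IsSublattice (quadrangleLattice F) :=
  isSublattice_latticeClosure

def IsConstructible (v : Fin 3 → F) : Prop :=
  span F {v} ∈ quadrangleLattice F

lemma isConstructible_e1 : IsConstructible (![1, 0, 0] : Fin 3 → F) :=
  subset_latticeClosure (by simp)

lemma isConstructible_e2 : IsConstructible (![0, 1, 0] : Fin 3 → F) :=
  subset_latticeClosure (by simp)

lemma isConstructible_e3 : IsConstructible (![0, 0, 1] : Fin 3 → F) :=
  subset_latticeClosure (by simp)

lemma isConstructible_e4 : IsConstructible (![1, 1, 1] : Fin 3 → F) :=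
  subset_latticeClosure (by simp)

lemma isConstructible_zero : IsConstructible (0 : Fin 3 → F) := by
  have hdisj : Disjoint (span F {(![1, 0, 0] : Fin 3 → F)}) (span F {![0, 1, 0]}) := by
    rw [disjoint_span_singleton' (by simp), mem_span_singleton]
    rintro ⟨a, ha⟩
    simpa using congr_fun ha 1
  rw [IsConstructible, span_zero_singleton, ← disjoint_iff.1 hdisj]
  exact isSublattice_quadrangleLattice.infClosed isConstructible_e1 isConstructible_e2

lemma IsConstructible.smul {v : Fin 3 → F} (hv : IsConstructible v) {c : F} (hc : c ≠ 0) :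
    IsConstructible (c • v) := by
  rwa [IsConstructible, span_singleton_smul_eq (IsUnit.mk0 c hc)]

lemma IsConstructible.of_cross_eq_smul {u v w x y : Fin 3 → F} (hu : IsConstructible u)
    (hv : IsConstructible v) (hw : IsConstructible w) (hx : IsConstructible x) {c : F}
    (hc : c ≠ 0) (hy : y ≠ 0) (h : u ⨯₃ v ⨯₃ (w ⨯₃ x) = c • y) : IsConstructible y := by
  have hmeet : IsConstructible (u ⨯₃ v ⨯₃ (w ⨯₃ x)) := by
    rw [IsConstructible, ← span_pair_inf_span_pair (by simp [h, hc, hy]), span_insert, span_insert]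
    have hS := isSublattice_quadrangleLattice (F := F)
    exact hS.infClosed (hS.supClosed hu hv) (hS.supClosed hw hx)
  simpa [h, smul_smul, hc] using hmeet.smul (inv_ne_zero hc)

def coordinates : Set F := {t | IsConstructible ![1, t, 0]}

lemma one_mem_coordinates : (1 : F) ∈ coordinates :=
  isConstructible_e1.of_cross_eq_smul isConstructible_e2 isConstructible_e3 isConstructible_e4
    (c := -1) (by simp) (by simp) (by ext i; fin_cases i <;> simp [cross_apply])

lemma isConstructible_011 : IsConstructible (![0, 1, 1] : Fin 3 → F) :=
  isConstructible_e2.of_cross_eq_smul isConstructible_e3 isConstructible_e1 isConstructible_e4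
    (c := -1) (by simp) (by simp) (by ext i; fin_cases i <;> simp [cross_apply])

lemma isConstructible_1tt {t : F} (ht : t ∈ coordinates) : IsConstructible ![1, t, t] :=
  IsConstructible.of_cross_eq_smul ht isConstructible_e3 isConstructible_e1 isConstructible_011
    (c := -1) (by simp) (by simp) (by ext i; fin_cases i <;> simp [cross_apply])

lemma isConstructible_10t {t : F} (ht : t ∈ coordinates) : IsConstructible ![1, 0, t] :=
  (isConstructible_1tt ht).of_cross_eq_smul isConstructible_e2 isConstructible_e1
    isConstructible_e3
    (c := 1) (by simp) (by simp) (by ext i; fin_cases i <;> simp [cross_apply])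

lemma isConstructible_1ab {a b : F} (ha : a ∈ coordinates) (hb : b ∈ coordinates) :
    IsConstructible ![1, a, b] :=
  IsConstructible.of_cross_eq_smul ha isConstructible_e3 (isConstructible_10t hb)
    isConstructible_e2
    (c := -1) (by simp) (by simp) (by ext i; fin_cases i <;> simp [cross_apply])

lemma sub_mem_coordinates_of_isConstructible {a b : F} (h : IsConstructible ![1, a, b]) :
    a - b ∈ coordinates :=
  h.of_cross_eq_smul isConstructible_011 isConstructible_e1 isConstructible_e2
    (c := -1) (by simp) (by simp) (by ext i; fin_cases i <;> simp [cross_apply])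

lemma mem_coordinates_of_isConstructible {a b : F} (h : IsConstructible ![1, a, b]) :
    a ∈ coordinates :=
  h.of_cross_eq_smul isConstructible_e3 isConstructible_e1 isConstructible_e2
    (c := -1) (by simp) (by simp) (by ext i; fin_cases i <;> simp [cross_apply])

lemma isConstructible_01c {c : F} (hc : c ∈ coordinates) : IsConstructible ![0, 1, c] :=
  (isConstructible_1ab one_mem_coordinates hc).of_cross_eq_smul isConstructible_e1
    isConstructible_e2 isConstructible_e3
    (c := -1) (by simp) (by simp) (by ext i; fin_cases i <;> simp [cross_apply])

lemma sub_mem_coordinates {a b : F} (ha : a ∈ coordinates) (hb : b ∈ coordinates) :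
    a - b ∈ coordinates :=
  sub_mem_coordinates_of_isConstructible (isConstructible_1ab ha hb)

lemma div_mem_coordinates {a c : F} (ha : a ∈ coordinates) (hc : c ∈ coordinates) :
    a / c ∈ coordinates := by
  rcases eq_or_ne c 0 with rfl | hc0
  · simpa [coordinates] using isConstructible_e1 -- `a / 0 = 0`
  refine mem_coordinates_of_isConstructible (b := a) ?_
  refine (isConstructible_10t ha).of_cross_eq_smul isConstructible_e2 isConstructible_e1
    (isConstructible_01c hc) hc0 (by simp) ?_
  ext i; fin_cases i <;> simp [cross_apply] <;> field_simp

lemma coordinates_eq_univ (hprime : ∀ K : Subfield F, K = ⊤) : (coordinates : Set F) = Set.univ :=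
  Subfield.eq_univ_of_sub_mem_of_div_mem hprime one_mem_coordinates
    (fun _ ha _ hb => sub_mem_coordinates ha hb) (fun _ ha _ hb => div_mem_coordinates ha hb)

lemma isConstructible_of_subfield_eq_top (hprime : ∀ K : Subfield F, K = ⊤)
    (v : Fin 3 → F) : IsConstructible v := by
  have hT (t : F) : t ∈ coordinates := by simp [coordinates_eq_univ hprime]
  rcases ne_or_eq (v 0) 0 with h0 | h0
  · have hv : v = v 0 • ![1, v 1 / v 0, v 2 / v 0] := by
      ext i; fin_cases i <;> simp <;> field_simp
    rw [hv]
    exact (isConstructible_1ab (hT _) (hT _)).smul h0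
  rcases ne_or_eq (v 1) 0 with h1 | h1
  · have hv : v = v 1 • ![0, 1, v 2 / v 1] := by
      ext i; fin_cases i <;> simp [h0]; field_simp
    rw [hv]
    exact (isConstructible_01c (hT _)).smul h1
  rcases ne_or_eq (v 2) 0 with h2 | h2
  · have hv : v = v 2 • ![0, 0, 1] := by
      ext i; fin_cases i <;> simp [h0, h1]
    rw [hv]
    exact isConstructible_e3.smul h2
  · have hv : v = 0 := by
      ext i; fin_cases i <;> simp [h0, h1, h2]
    rw [hv]
    exact isConstructible_zero

end Quadrangle

/-- Over a prime field `F` (no proper subfield), the four points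
`F·(1,0,0)`, `F·(0,1,0)`, `F·(0,0,1)`, `F·(1,1,1)` generate the subspace
lattice of `F³`. -/
theorem stmt_17 (F : Type*) [Field F] (hprime : ∀ K : Subfield F, K = ⊤) :
    latticeClosure
      ({Submodule.span F {(![1, 0, 0] : Fin 3 → F)},
        Submodule.span F {(![0, 1, 0] : Fin 3 → F)},
        Submodule.span F {(![0, 0, 1] : Fin 3 → F)},
        Submodule.span F {(![1, 1, 1] : Fin 3 → F)}} :
        Set (Submodule F (Fin 3 → F))) = Set.univ :=
  Set.eq_univ_of_forall fun W =>
    isSublattice_quadrangleLattice.supClosed.mem_of_fg (isConstructible_of_subfield_eq_top hprime)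
      (IsNoetherian.noetherian W)
end

section
/- Let F be a field and let L be the subspace lattice of F³. Then no 4-element subset {g_1, g_2, g_3, g_4} of L in which exactly two of the g_i are one-dimensional (points) and exactly two are two-dimensional (lines) generates L. -/
/-!
In any lattice, `Set.Iic n ∪ Set.Ici m` is closed under `⊔` and `⊓`. With `n = p₁ ⊔ p₂` and
`m = l₁ ⊓ l₂` it contains the two points and the two lines, hence everything they generate.
By dimension count `n` is a proper nonzero subspace and `m ≠ 0`, so pick `0 ≠ v ∈ m`. If `v ∈ n`,
any point off `n` avoids both `Iic n` and `Ici m`; otherwise, for `0 ≠ w ∈ n`, the third point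
`v + w` of the line through `v` and `w` does.
-/

open Module

theorem isSublattice_Iic_union_Ici {α : Type*} [Lattice α] (a b : α) :
    IsSublattice (Set.Iic a ∪ Set.Ici b) where
  supClosed := by
    rintro x (hx | hx) y (hy | hy)
    exacts [Or.inl (sup_le hx hy), Or.inr (le_sup_of_le_right hy),
      Or.inr (le_sup_of_le_left hx), Or.inr (le_sup_of_le_left hx)]
  infClosed := by
    rintro x (hx | hx) y (hy | hy)
    exacts [Or.inl (inf_le_of_left_le hx), Or.inl (inf_le_of_left_le hx),
      Or.inl (inf_le_of_right_le hy), Or.inr (le_inf hx hy)]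

theorem Finset.forall_or_of_card_filter_add_card_filter {ι : Type*} [Fintype ι]
    {p q : ι → Prop} [DecidablePred p] [DecidablePred q] (hpq : ∀ i, p i → ¬ q i)
    (hcard : (univ.filter p).card + (univ.filter q).card = Fintype.card ι) (i : ι) :
    p i ∨ q i := by
  classical
  have hunion : univ.filter (fun i => p i ∨ q i) = univ := by
    apply eq_univ_of_card
    rw [filter_or, card_union_of_disjoint (disjoint_filter.2 fun i _ => hpq i), hcard]
  exact filter_eq_self.1 hunion i (mem_univ i)

namespace Submodule

variable {K V : Type*} [DivisionRing K] [AddCommGroup V] [Module K V]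

theorem sup_ne_top_of_finrank_add_lt [FiniteDimensional K V] {s t : Submodule K V}
    (h : finrank K s + finrank K t < finrank K V) : s ⊔ t ≠ ⊤ := by
  intro hst
  have := finrank_add_le_finrank_add_finrank s t
  rw [hst, finrank_top] at this
  omega

theorem inf_ne_bot_of_finrank_lt_add [FiniteDimensional K V] {s t : Submodule K V}
    (h : finrank K V < finrank K s + finrank K t) : s ⊓ t ≠ ⊥ :=
  fun hst => (finrank_add_finrank_le_of_disjoint (disjoint_iff.2 hst)).not_gt h

theorem exists_notMem_and_not_le_span_singleton {n m : Submodule K V} (hn_top : n ≠ ⊤)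
    (hn_bot : n ≠ ⊥) (hm : m ≠ ⊥) : ∃ x, x ∉ n ∧ ¬ m ≤ K ∙ x := by
  obtain ⟨v, hvm, hv⟩ := exists_mem_ne_zero_of_ne_bot hm
  suffices ∃ x ∉ n, v ∉ K ∙ x from
    let ⟨x, hxn, hvx⟩ := this
    ⟨x, hxn, fun hmx => hvx (hmx hvm)⟩
  by_cases hvn : v ∈ n
  · obtain ⟨u, hun⟩ := SetLike.exists_not_mem_of_ne_top n hn_top
    refine ⟨u, hun, fun hvu => ?_⟩
    obtain ⟨c, rfl⟩ := mem_span_singleton.1 hvu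
    have hc : c ≠ 0 := by rintro rfl; simp at hv
    exact hun (by simpa [hc] using n.smul_mem c⁻¹ hvn)
  · obtain ⟨w, hwn, hw⟩ := exists_mem_ne_zero_of_ne_bot hn_bot
    refine ⟨v + w, fun h => hvn (by simpa using n.sub_mem h hwn), fun hvx => ?_⟩
    obtain ⟨c, hc⟩ := mem_span_singleton.1 hvx
    have hc1 : c ≠ 1 := by rintro rfl; exact hw (by simpa using hc)
    have hcw : (1 - c) • v = c • w := by
      rw [sub_smul, one_smul, sub_eq_iff_eq_add, ← smul_add, add_comm, hc]
    have hv' : v = (1 - c)⁻¹ • c • w := by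
      rw [← hcw, smul_smul, inv_mul_cancel₀ (sub_ne_zero.2 hc1.symm), one_smul]
    exact hvn (hv' ▸ n.smul_mem _ (n.smul_mem c hwn))

end Submodule

open Module Submodule

/-- No quadruple of subspaces of `F³` consisting of exactly two
points (1-dimensional subspaces) and exactly two lines (2-dimensional
subspaces) generates the subspace lattice of `F³`. -/
theorem stmt_18 (F : Type*) [Field F] (g : Fin 4 → Submodule F (Fin 3 → F))
    (hpoints : (Finset.univ.filter
      (fun i => Module.finrank F (g i) = 1)).card = 2)
    (hlines : (Finset.univ.filter
      (fun i => Module.finrank F (g i) = 2)).card = 2) :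
    latticeClosure (Set.range g) ≠ Set.univ := by
  classical
  have hrank : ∀ i, finrank F (g i) = 1 ∨ finrank F (g i) = 2 :=
    Finset.forall_or_of_card_filter_add_card_filter
      (p := fun i => finrank F (g i) = 1) (q := fun i => finrank F (g i) = 2)
      (fun i h₁ h₂ => by omega)
      (by rw [hpoints, hlines]; rfl)
  obtain ⟨a, b, -, hab⟩ := Finset.card_eq_two.mp hpoints
  obtain ⟨c, d, -, hcd⟩ := Finset.card_eq_two.mp hlines
  simp only [Finset.ext_iff, Finset.mem_filter, Finset.mem_univ, true_and, Finset.mem_insert,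
    Finset.mem_singleton] at hab hcd
  have ha : finrank F (g a) = 1 := (hab a).2 (.inl rfl)
  have hb : finrank F (g b) = 1 := (hab b).2 (.inr rfl)
  have hc : finrank F (g c) = 2 := (hcd c).2 (.inl rfl)
  have hd : finrank F (g d) = 2 := (hcd d).2 (.inr rfl)
  set n := g a ⊔ g b
  set m := g c ⊓ g d
  have hgen : Set.range g ⊆ Set.Iic n ∪ Set.Ici m := by
    rintro _ ⟨i, rfl⟩
    rcases hrank i with h | h
    · rcases (hab i).1 h with rfl | rfl
      exacts [.inl (le_sup_left : g i ≤ n), .inl (le_sup_right : g i ≤ n)]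
    · rcases (hcd i).1 h with rfl | rfl
      exacts [.inr (inf_le_left : m ≤ g i), .inr (inf_le_right : m ≤ g i)]
  have hn_top : n ≠ ⊤ := sup_ne_top_of_finrank_add_lt (by simp [ha, hb])
  have hn_bot : n ≠ ⊥ :=
    ne_bot_of_le_ne_bot (fun h => by rw [h, finrank_bot] at ha; omega) le_sup_left
  have hm_bot : m ≠ ⊥ := inf_ne_bot_of_finrank_lt_add (by simp [hc, hd])
  obtain ⟨x, hxn, hmx⟩ := exists_notMem_and_not_le_span_singleton hn_top hn_bot hm_bot
  intro hclosure
  rcases latticeClosure_min hgen (isSublattice_Iic_union_Ici n m)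
    (hclosure ▸ Set.mem_univ (F ∙ x)) with h | h
  exacts [hxn ((span_singleton_le_iff_mem x n).1 h), hmx h]
end
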